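/- arXiv:1812.00980 — 5 statements merged into one kernel-verified Lean document; each statement's English description precedes it below -/
import Mathlib

section
/- If u ≡ 0 on ℝᵈ and ρ ∇(δF/δρ) = 0 with δF/δρ = Π'(ρ) + H(x,ρ) continuous, then Π'(ρ) + H is constant on each connected component of the support of ρ. Conversely, any pair (ρ, u=0) with Π'(ρ) + H locally constant on supp(ρ) is a stationary solution of the damped hydrodynamic system. -/
/-!
Off the support of `ρ` the stationarity condition is void, and on the open set `supp ρ` it says
that `Π'(ρ) + H` has vanishing derivative. In a normed space connected components of open sets are
open, so by the mean value theorem a function with zero derivative on an open set is constant on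
each of its components; conversely, a function constant on the component of `x`, a neighbourhood
of `x`, has zero derivative at `x`.
-/

open Function Set

theorem forall_smul_eq_zero_iff_forall_mem_support {α R M : Type*} [Semiring R]
    [IsCancelMulZero R] [AddCommMonoid M] [Module R M] [Module.IsTorsionFree R M]
    (g : α → R) (v : α → M) :
    (∀ x, g x • v x = 0) ↔ ∀ x ∈ support g, v x = 0 :=
  forall_congr' fun x ↦ by rw [smul_eq_zero, or_iff_not_imp_left, mem_support]

section ConnectedComponent

variable {E F : Type*} [NormedAddCommGroup E] [NormedSpace ℝ E] [NormedAddCommGroup F]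
  [NormedSpace ℝ F] {f : E → F} {U : Set E} {x y : E}

theorem IsOpen.eq_of_mem_connectedComponentIn_of_fderiv_eq_zero (hU : IsOpen U)
    (hf : DifferentiableOn ℝ f U) (hf' : EqOn (fderiv ℝ f) 0 U)
    (hy : y ∈ connectedComponentIn U x) : f y = f x := by
  have hx : x ∈ U := connectedComponentIn_nonempty_iff.mp ⟨y, hy⟩
  exact hU.connectedComponentIn.is_const_of_fderiv_eq_zero isPreconnected_connectedComponentIn
    (hf.mono (connectedComponentIn_subset U x))
    (hf'.mono (connectedComponentIn_subset U x)) hy (mem_connectedComponentIn hx)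

theorem IsOpen.fderiv_eq_zero_of_forall_mem_connectedComponentIn (hU : IsOpen U) (hx : x ∈ U)
    (h : ∀ y ∈ connectedComponentIn U x, f y = f x) : fderiv ℝ f x = 0 := by
  have hconst : f =ᶠ[nhds x] fun _ ↦ f x :=
    Filter.eventually_of_mem (connectedComponentIn_mem_nhds (hU.mem_nhds hx)) h
  rw [hconst.fderiv_eq, fderiv_const_apply]

theorem IsOpen.eqOn_fderiv_zero_iff_forall_mem_connectedComponentIn (hU : IsOpen U)
    (hf : DifferentiableOn ℝ f U) :
    EqOn (fderiv ℝ f) 0 U ↔ ∀ x ∈ U, ∀ y ∈ connectedComponentIn U x, f y = f x :=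
  ⟨fun hf' _ _ _ hy ↦ hU.eq_of_mem_connectedComponentIn_of_fderiv_eq_zero hf hf' hy,
    fun h x hx ↦ hU.fderiv_eq_zero_of_forall_mem_connectedComponentIn hx (h x hx)⟩

end ConnectedComponent

theorem stmt_8_general (d : ℕ) (ρ H : (Fin d → ℝ) → ℝ) (dPif : ℝ → ℝ)
    (hρc : Continuous ρ)
    (hμ : Differentiable ℝ (fun x => dPif (ρ x) + H x)) :
    (∀ x, ρ x • fderiv ℝ (fun y => dPif (ρ y) + H y) x = 0) ↔
    (∀ x ∈ Function.support ρ, ∀ y ∈ connectedComponentIn (Function.support ρ) x,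
      dPif (ρ y) + H y = dPif (ρ x) + H x) := by
  rw [forall_smul_eq_zero_iff_forall_mem_support]
  exact hρc.isOpen_support.eqOn_fderiv_zero_iff_forall_mem_connectedComponentIn
    hμ.differentiableOn

/-- Characterization of stationary states: with `u ≡ 0`, the stationarity condition
`ρ∇(δF/δρ) = 0` (where `δF/δρ = Pi'(ρ) + H` is differentiable and `ρ` is continuous
and nonnegative) holds if and only if `Pi'(ρ) + H` is constant on each connected
component of the support of `ρ`. -/
theorem stmt_8 (d : ℕ) (ρ H : (Fin d → ℝ) → ℝ) (dPif : ℝ → ℝ)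
    (hρc : Continuous ρ) (hρ0 : ∀ x, 0 ≤ ρ x)
    (hμ : Differentiable ℝ (fun x => dPif (ρ x) + H x)) :
    (∀ x, ρ x • fderiv ℝ (fun y => dPif (ρ y) + H y) x = 0) ↔
    (∀ x ∈ Function.support ρ, ∀ y ∈ connectedComponentIn (Function.support ρ) x,
      dPif (ρ y) + H y = dPif (ρ x) + H x) :=
  stmt_8_general d ρ H dPif hρc hμ
end

section
/- The pair ρ(x,t) = M₀ e^{−(x−ct)²/2} / ∫e^{−y²/2}dy, u(x,t) = c (constant velocity c) is an exact traveling-wave solution of the Euler system with P(ρ) = ρ, W(x) = x²/2, no external potential, no linear damping, and Cucker–Smale alignment term, i.e. it satisfies ∂ₜρ + ∂ₓ(ρu) = 0 and ∂ₜ(ρu) + ∂ₓ(ρu²) = −∂ₓρ − ρ∂ₓ(W⋆ρ) − ρ∫ψ(x−y)(u(x)−u(y))ρ(y)dy for any symmetric ψ. -/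
/-!
At time `t` the density is the `𝒩(ct, 1)` probability density, so `ρ(t, x) = φ(x - ct)`, with
`φ` the standard normal density, is a travelling wave and `∂ₜρ + c ∂ₓρ = 0`; since `u ≡ c` this
is the continuity equation, and it makes the left side `c (∂ₜρ + c ∂ₓρ)` of the momentum
equation vanish, as does the alignment term. What remains is the balance of pressure and
interaction: `∂ₓρ = -(x - ct) ρ`, while for `W(x) = x²/2` and a probability density `ρ`,
`∂ₓ(W ⋆ ρ)(x) = x - ∫ z ρ(z) dz = x - ct`.
-/

open MeasureTheory ProbabilityTheory Real

open scoped NNReal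

lemma integral_exp_neg_sq_div_two : ∫ y : ℝ, exp (-(y ^ 2) / 2) = √(2 * π) := by
  have h := integral_gaussian (1 / 2)
  rw [div_div_eq_mul_div, div_one, mul_comm] at h
  convert h using 4 with y
  ring

lemma gaussianPDFReal_one_apply (m x : ℝ) :
    gaussianPDFReal m 1 x = exp (-((x - m) ^ 2) / 2) / √(2 * π) := by
  simp only [gaussianPDFReal, NNReal.coe_one, mul_one, inv_mul_eq_div]

lemma gaussianPDFReal_comm (μ : ℝ) (v : ℝ≥0) (x : ℝ) :
    gaussianPDFReal μ v x = gaussianPDFReal x v μ := by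
  simp only [gaussianPDFReal, sub_sq_comm x μ]

lemma hasDerivAt_gaussianPDFReal (μ : ℝ) (v : ℝ≥0) (x : ℝ) :
    HasDerivAt (gaussianPDFReal μ v) (-(x - μ) / v * gaussianPDFReal μ v x) x := by
  have hexp : HasDerivAt (fun y => -(y - μ) ^ 2 / (2 * v)) (-(2 * (x - μ)) / (2 * v)) x := by
    simpa using (((hasDerivAt_id x).sub_const μ).pow 2).neg.div_const (2 * (v : ℝ))
  exact (hexp.exp.const_mul (√(2 * π * v))⁻¹).congr_deriv (by rw [gaussianPDFReal]; ring)

lemma hasDerivAt_gaussianPDFReal_mean (μ : ℝ) (v : ℝ≥0) (x : ℝ) :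
    HasDerivAt (fun m => gaussianPDFReal m v x) ((x - μ) / v * gaussianPDFReal μ v x) μ := by
  simp_rw [gaussianPDFReal_comm _ v x]
  exact (hasDerivAt_gaussianPDFReal x v μ).congr_deriv (by ring)

lemma hasDerivAt_integral_sq_sub_div_two {μ : Measure ℝ} [IsProbabilityMeasure μ]
    (hμ : MemLp id 2 μ) (x : ℝ) :
    HasDerivAt (fun y => ∫ z, (y - z) ^ 2 / 2 ∂μ) (x - ∫ z, z ∂μ) x := by
  have hz : Integrable (fun z : ℝ => z) μ := hμ.integrable one_le_two
  have hz_sq : Integrable (fun z : ℝ => z ^ 2) μ := hμ.integrable_sq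
  have hexpand : (fun y => ∫ z, (y - z) ^ 2 / 2 ∂μ)
      = fun y => y ^ 2 / 2 - y * ∫ z, z ∂μ + (∫ z, z ^ 2 ∂μ) / 2 := by
    funext y
    have hsplit : (fun z : ℝ => (y - z) ^ 2 / 2)
        = fun z => (y ^ 2 / 2 - y * z) + z ^ 2 / 2 := by
      funext z; ring
    have hlin : Integrable (fun z : ℝ => y ^ 2 / 2 - y * z) μ :=
      (integrable_const _).sub (hz.const_mul y)
    rw [hsplit, integral_add hlin (hz_sq.div_const 2), integral_sub (integrable_const _)
      (hz.const_mul y), integral_const, probReal_univ, one_smul, integral_const_mul,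
      integral_div]
  rw [hexpand]
  exact ((((hasDerivAt_pow 2 x).div_const 2).sub
    ((hasDerivAt_id x).mul_const (∫ z, z ∂μ))).add_const _).congr_deriv (by simp)

lemma hasDerivAt_integral_sq_sub_div_two_mul_gaussianPDFReal (m : ℝ) {v : ℝ≥0} (hv : v ≠ 0)
    (x : ℝ) : HasDerivAt (fun y => ∫ z, (y - z) ^ 2 / 2 * gaussianPDFReal m v z) (x - m) x := by
  convert hasDerivAt_integral_sq_sub_div_two (memLp_id_gaussianReal (μ := m) (v := v) 2) x
    using 1
  · funext y
    simp_rw [integral_gaussianReal_eq_integral_smul hv, smul_eq_mul, mul_comm]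
  · rw [integral_id_gaussianReal]

theorem stmt_11_general (M₀ c : ℝ) (hM : M₀ = 1) (ψ : ℝ → ℝ)
    (Z : ℝ) (hZ : Z = ∫ y : ℝ, Real.exp (-(y^2)/2))
    (ρ : ℝ → ℝ → ℝ)
    (hρ : ∀ t x, ρ t x = M₀ * Real.exp (-((x - c*t)^2)/2) / Z) :
    (∀ t x : ℝ, deriv (fun s => ρ s x) t + deriv (fun y => ρ t y * c) x = 0) ∧
    (∀ t x : ℝ, deriv (fun s => ρ s x * c) t + deriv (fun y => ρ t y * c^2) x
      = -(deriv (fun y => ρ t y) x)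
        - ρ t x * deriv (fun y => ∫ z : ℝ, ((y - z)^2/2) * ρ t z) x
        - ρ t x * ∫ z : ℝ, ψ (x - z) * (c - c) * ρ t z) := by
  have hρ_gauss : ∀ t, ρ t = gaussianPDFReal (c * t) 1 := fun t => funext fun x => by
    rw [hρ, hM, one_mul, hZ, integral_exp_neg_sq_div_two, gaussianPDFReal_one_apply]
  have hdt : ∀ t x, HasDerivAt (fun s => ρ s x) (c * ((x - c * t) * ρ t x)) t := fun t x => by
    simp_rw [hρ_gauss]
    exact ((hasDerivAt_gaussianPDFReal_mean (c * t) 1 x).comp t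
      ((hasDerivAt_id t).const_mul c)).congr_deriv (by simp only [NNReal.coe_one]; ring)
  have hdx : ∀ t x, HasDerivAt (ρ t) (-(x - c * t) * ρ t x) x := fun t x => by
    simpa [hρ_gauss] using hasDerivAt_gaussianPDFReal (c * t) 1 x
  have hforce : ∀ t x, deriv (fun y => ∫ z, (y - z) ^ 2 / 2 * ρ t z) x = x - c * t :=
    fun t x => by
      simpa [hρ_gauss] using
        (hasDerivAt_integral_sq_sub_div_two_mul_gaussianPDFReal (c * t) one_ne_zero x).deriv
  refine ⟨fun t x => ?_, fun t x => ?_⟩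
  · rw [(hdt t x).deriv, ((hdx t x).mul_const c).deriv]
    ring
  · rw [((hdt t x).mul_const c).deriv, ((hdx t x).mul_const (c ^ 2)).deriv, (hdx t x).deriv,
      hforce, sub_self]
    simp only [mul_zero, zero_mul, integral_zero]
    ring

/-- The travelling Gaussian `ρ(x,t) = M₀ e^{-(x-ct)²/2}/∫e^{-y²/2}` with constant
velocity `u ≡ c` is an exact travelling-wave solution of the Euler system with
`P(ρ) = ρ`, interaction potential `W(x) = x²/2`, no external potential, no linear
damping, and Cucker–Smale alignment, for any symmetric communication function `ψ`. -/
theorem stmt_11 (M₀ c : ℝ) (hM : M₀ = 1) (ψ : ℝ → ℝ) (hψsymm : ∀ x, ψ (-x) = ψ x)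
    (Z : ℝ) (hZ : Z = ∫ y : ℝ, Real.exp (-(y^2)/2))
    (ρ : ℝ → ℝ → ℝ)
    (hρ : ∀ t x, ρ t x = M₀ * Real.exp (-((x - c*t)^2)/2) / Z) :
    (∀ t x : ℝ, deriv (fun s => ρ s x) t + deriv (fun y => ρ t y * c) x = 0) ∧
    (∀ t x : ℝ, deriv (fun s => ρ s x * c) t + deriv (fun y => ρ t y * c^2) x
      = -(deriv (fun y => ρ t y) x)
        - ρ t x * deriv (fun y => ∫ z : ℝ, ((y - z)^2/2) * ρ t z) x
        - ρ t x * ∫ z : ℝ, ψ (x - z) * (c - c) * ρ t z) :=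
  stmt_11_general M₀ c hM ψ Z hZ ρ hρ
end

section
/- Well-balanced property of the first-order scheme: suppose the cell averages satisfy uᵢ = 0 for all i and Π'(ρᵢ) + Hᵢ = C on each connected component of the discrete support {i : ρᵢ > 0}. Then the interface reconstructions ρᵢ₊½⁻ = ξ((Π'(ρᵢ) + Hᵢ − Hᵢ₊½)₊) and ρᵢ₊½⁺ = ξ((Π'(ρᵢ₊₁) + Hᵢ₊₁ − Hᵢ₊½)₊) with Hᵢ₊½ = max(Hᵢ, Hᵢ₊₁) coincide: ρᵢ₊½⁻ = ρᵢ₊½⁺, and consequently for any consistent numerical flux 𝔉 the flux difference exactly balances the source term Sᵢ = (0, P(ρᵢ₊½⁻) − P(ρᵢ₋½⁺))/Δxᵢ, so dUᵢ/dt = 0 for all i. -/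
/-! At rest the reconstructed densities only see the levels `Π'(ρᵢ) + Hᵢ`. Across an
interface between wet cells the two levels agree by the steady-state condition; if one
side is dry, admissibility puts the wet level below the dry cell's `H`, so both truncated
arguments `(level − Hᵢ₊½)₊` vanish. Hence `ρᵢ₊½⁻ = ρᵢ₊½⁺`, and a consistent flux at
`u = 0` reduces to the pressure `P(ρᵢ₊½^±)`, which is exactly what the source term removes. -/

lemma max_sub_zero_eq_of_eq_or_le {α : Type*} [AddCommGroup α] [LinearOrder α]
    [IsOrderedAddMonoid α] {a b m : α} (h : a = b ∨ (a ≤ m ∧ b ≤ m)) :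
    max (a - m) 0 = max (b - m) 0 := by
  rcases h with rfl | ⟨ha, hb⟩
  · rfl
  · rw [max_eq_right (sub_nonpos.2 ha), max_eq_right (sub_nonpos.2 hb)]

section Levels

variable {dPif : ℝ → ℝ} {ρ H : ℤ → ℝ}

lemma level_eq_of_vacuum (hdPif0 : dPif 0 = 0) {i : ℤ} (hi : ρ i = 0) :
    dPif (ρ i) + H i = H i := by
  rw [hi, hdPif0, zero_add]

lemma interface_levels_eq_or_le_max (hρnn : ∀ i, 0 ≤ ρ i) (hdPif0 : dPif 0 = 0)
    (hsteady : ∀ i, 0 < ρ i → 0 < ρ (i+1) →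
      dPif (ρ i) + H i = dPif (ρ (i+1)) + H (i+1))
    (hadm : ∀ i, ρ i = 0 → ∀ j, (j = i + 1 ∨ j = i - 1) → 0 < ρ j →
      dPif (ρ j) + H j ≤ H i)
    (i : ℤ) :
    dPif (ρ i) + H i = dPif (ρ (i+1)) + H (i+1) ∨
      (dPif (ρ i) + H i ≤ max (H i) (H (i+1)) ∧
        dPif (ρ (i+1)) + H (i+1) ≤ max (H i) (H (i+1))) := by
  rcases (hρnn i).lt_or_eq with hwet | hdry <;>
    rcases (hρnn (i+1)).lt_or_eq with hwet' | hdry'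
  · exact .inl (hsteady i hwet hwet')
  · have hle := hadm (i+1) hdry'.symm i (.inr (by ring)) hwet
    rw [level_eq_of_vacuum hdPif0 hdry'.symm]
    exact .inr ⟨hle.trans (le_max_right _ _), le_max_right _ _⟩
  · have hle := hadm i hdry.symm (i+1) (.inl rfl) hwet'
    rw [level_eq_of_vacuum hdPif0 hdry.symm]
    exact .inr ⟨le_max_left _ _, hle.trans (le_max_left _ _)⟩
  · rw [level_eq_of_vacuum hdPif0 hdry.symm, level_eq_of_vacuum hdPif0 hdry'.symm]
    exact .inr ⟨le_max_left _ _, le_max_right _ _⟩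

end Levels

lemma flux_at_rest {P : ℝ → ℝ} {𝔉 : ℝ × ℝ → ℝ × ℝ → ℝ × ℝ}
    (hcons : ∀ r v : ℝ, 𝔉 (r, v) (r, v) = (r * v, r * v^2 + P r)) (r : ℝ) :
    𝔉 (r, 0) (r, 0) = (0, P r) := by
  simp [hcons]

theorem stmt_13_general (dPif P ξ : ℝ → ℝ) (ρ u H Δx : ℤ → ℝ)
    (𝔉 : ℝ × ℝ → ℝ × ℝ → ℝ × ℝ)
    -- consistency `𝔉(U,U) = F(U)` with `F(ρ, ρu) = (ρu, ρu² + P(ρ))`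
    (hcons : ∀ r v : ℝ, 𝔉 (r, v) (r, v) = (r * v, r * v^2 + P r))
    (hρnn : ∀ i, 0 ≤ ρ i)
    -- all discrete velocities vanish
    (hu : ∀ i, u i = 0)
    (hdPif0 : dPif 0 = 0)
    -- `Pi'(ρᵢ) + Hᵢ` constant on each connected component of `{i : ρᵢ > 0}`
    (hsteady : ∀ i, 0 < ρ i → 0 < ρ (i+1) →
      dPif (ρ i) + H i = dPif (ρ (i+1)) + H (i+1))
    -- admissibility of the steady state at vacuum cells
    (hadm : ∀ i, ρ i = 0 → ∀ j, (j = i + 1 ∨ j = i - 1) → 0 < ρ j →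
      dPif (ρ j) + H j ≤ H i)
    -- interface reconstructions
    (ρm ρp : ℤ → ℝ)
    (hρm : ∀ i, ρm i = ξ (max (dPif (ρ i) + H i - max (H i) (H (i+1))) 0))
    (hρp : ∀ i, ρp i = ξ (max (dPif (ρ (i+1)) + H (i+1) - max (H i) (H (i+1))) 0)) :
    (∀ i, ρm i = ρp i) ∧
    (∀ i, 𝔉 (ρm i, u i) (ρp i, u (i+1)) - 𝔉 (ρm (i-1), u (i-1)) (ρp (i-1), u i)
      = ((0:ℝ), P (ρm i) - P (ρp (i-1)))) ∧
    (∀ i, (Δx i)⁻¹ •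
        (((0:ℝ), P (ρm i) - P (ρp (i-1)))
          - (𝔉 (ρm i, u i) (ρp i, u (i+1)) - 𝔉 (ρm (i-1), u (i-1)) (ρp (i-1), u i)))
      = ((0:ℝ), (0:ℝ))) := by
  have hrecon : ∀ i, ρm i = ρp i := fun i => by
    rw [hρm, hρp, max_sub_zero_eq_of_eq_or_le
      (interface_levels_eq_or_le_max hρnn hdPif0 hsteady hadm i)]
  have hflux : ∀ i, 𝔉 (ρm i, u i) (ρp i, u (i+1)) = (0, P (ρp i)) := fun i => by
    rw [hrecon i, hu, hu, flux_at_rest hcons]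
  have hbalance : ∀ i, 𝔉 (ρm i, u i) (ρp i, u (i+1)) - 𝔉 (ρm (i-1), u (i-1)) (ρp (i-1), u i)
      = ((0:ℝ), P (ρm i) - P (ρp (i-1))) := fun i => by
    have hprev := hflux (i-1)
    rw [sub_add_cancel] at hprev
    rw [hflux i, hprev, Prod.mk_sub_mk, sub_zero, hrecon i]
  refine ⟨hrecon, hbalance, fun i => ?_⟩
  rw [hbalance i, sub_self, smul_zero]
  rfl

/-- Well-balanced property of the first-order scheme: if `uᵢ = 0` for all `i` and
`Pi'(ρᵢ) + Hᵢ` is constant on each connected component of the discrete support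
(together with the natural admissibility conditions at vacuum cells), then the
interface reconstructions
`ρᵢ₊½⁻ = ξ((Pi'(ρᵢ)+Hᵢ-Hᵢ₊½)₊)` and `ρᵢ₊½⁺ = ξ((Pi'(ρᵢ₊₁)+Hᵢ₊₁-Hᵢ₊½)₊)`
with `Hᵢ₊½ = max(Hᵢ,Hᵢ₊₁)` coincide, and for any consistent numerical flux `𝔉`
the flux difference exactly balances the well-balanced source term
`Sᵢ = (0, P(ρᵢ₊½⁻) - P(ρᵢ₋½⁺))/Δxᵢ`, so `dUᵢ/dt = 0` for all `i`. -/
theorem stmt_13 (dPif P ξ : ℝ → ℝ) (ρ u H Δx : ℤ → ℝ)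
    (𝔉 : ℝ × ℝ → ℝ × ℝ → ℝ × ℝ)
    -- consistency `𝔉(U,U) = F(U)` with `F(ρ, ρu) = (ρu, ρu² + P(ρ))`
    (hcons : ∀ r v : ℝ, 𝔉 (r, v) (r, v) = (r * v, r * v^2 + P r))
    (hΔx : ∀ i, 0 < Δx i) (hρnn : ∀ i, 0 ≤ ρ i)
    -- all discrete velocities vanish
    (hu : ∀ i, u i = 0)
    -- `ξ` is the inverse of `Pi'` extended by zero
    (hξ : ∀ s : ℝ, 0 < s → ξ (dPif s) = s)
    (hξ0 : ∀ y : ℝ, y ≤ 0 → ξ y = 0)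
    (hdPif0 : dPif 0 = 0)
    -- `Pi'(ρᵢ) + Hᵢ` constant on each connected component of `{i : ρᵢ > 0}`
    (hsteady : ∀ i, 0 < ρ i → 0 < ρ (i+1) →
      dPif (ρ i) + H i = dPif (ρ (i+1)) + H (i+1))
    -- admissibility of the steady state at vacuum cells
    (hadm : ∀ i, ρ i = 0 → ∀ j, (j = i + 1 ∨ j = i - 1) → 0 < ρ j →
      dPif (ρ j) + H j ≤ H i)
    -- interface reconstructions
    (ρm ρp : ℤ → ℝ)
    (hρm : ∀ i, ρm i = ξ (max (dPif (ρ i) + H i - max (H i) (H (i+1))) 0))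
    (hρp : ∀ i, ρp i = ξ (max (dPif (ρ (i+1)) + H (i+1) - max (H i) (H (i+1))) 0)) :
    (∀ i, ρm i = ρp i) ∧
    (∀ i, 𝔉 (ρm i, u i) (ρp i, u (i+1)) - 𝔉 (ρm (i-1), u (i-1)) (ρp (i-1), u i)
      = ((0:ℝ), P (ρm i) - P (ρp (i-1)))) ∧
    (∀ i, (Δx i)⁻¹ •
        (((0:ℝ), P (ρm i) - P (ρp (i-1)))
          - (𝔉 (ρm i, u i) (ρp i, u (i+1)) - 𝔉 (ρm (i-1), u (i-1)) (ρp (i-1), u i)))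
      = ((0:ℝ), (0:ℝ))) :=
  stmt_13_general dPif P ξ ρ u H Δx 𝔉 hcons hρnn hu hdPif0 hsteady hadm ρm ρp hρm hρp
end

section
/- Nonnegativity preservation: if ρᵢ = 0 for some cell i, then the well-balanced reconstructions give ρᵢ₊½⁻ = ρᵢ₋½⁺ = 0 (since ξ((Π'(0⁺) + Hᵢ − Hᵢ±½)₊) = 0 when Π' maps to −∞ at 0 or the positive part vanishes), and for a density-nonnegativity-preserving numerical flux this implies dρᵢ/dt ≥ 0, so the semidiscrete density stays nonnegative. -/
/-- Nonnegativity preservation: if `ρᵢ = 0` then the well-balanced reconstructions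
give `ρᵢ₊½⁻ = ρᵢ₋½⁺ = 0`, and for a numerical density flux `𝔉ρ` preserving
nonnegativity for the homogeneous problem this implies `dρᵢ/dt ≥ 0`. -/
theorem stmt_14 (dPif ξ : ℝ → ℝ) (ρ u H Δx : ℤ → ℝ)
    (𝔉ρ : ℝ × ℝ → ℝ × ℝ → ℝ)
    (hΔx : ∀ i, 0 < Δx i)
    (hdPif0 : dPif 0 = 0) (hξ0 : ∀ y : ℝ, y ≤ 0 → ξ y = 0)
    -- nonnegativity property of the numerical flux for the homogeneous problem
    (hflux : ∀ u₀ rp up rm um : ℝ,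
      𝔉ρ (0, u₀) (rp, up) - 𝔉ρ (rm, um) (0, u₀) ≤ 0)
    -- interface reconstructions
    (ρm ρp : ℤ → ℝ)
    (hρm : ∀ i, ρm i = ξ (max (dPif (ρ i) + H i - max (H i) (H (i+1))) 0))
    (hρp : ∀ i, ρp i = ξ (max (dPif (ρ (i+1)) + H (i+1) - max (H i) (H (i+1))) 0))
    (i : ℤ) (hi : ρ i = 0) :
    ρm i = 0 ∧ ρp (i-1) = 0 ∧
    0 ≤ (Δx i)⁻¹ *
      (𝔉ρ (ρm (i-1), u (i-1)) (ρp (i-1), u i) - 𝔉ρ (ρm i, u i) (ρp i, u (i+1))) := by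
  have h1 : ρm i = 0 := by
    rw [hρm i, hi, hdPif0]
    have : max (0 + H i - max (H i) (H (i+1))) 0 = 0 := by
      apply max_eq_right; simp [le_max_left]
    rw [this]; exact hξ0 0 le_rfl
  have h2 : ρp (i-1) = 0 := by
    rw [hρp (i-1)]
    have hii : i - 1 + 1 = i := by ring
    rw [hii, hi, hdPif0]
    have : max (0 + H i - max (H (i-1)) (H i)) 0 = 0 := by
      apply max_eq_right; simp [le_max_right]
    rw [this]; exact hξ0 0 le_rfl
  refine ⟨h1, h2, ?_⟩
  rw [h1, h2]
  apply mul_nonneg (le_of_lt (inv_pos.mpr (hΔx i)))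
  have := hflux (u i) (ρp i) (u (i+1)) (ρm (i-1)) (u (i-1))
  linarith
end

section
/- Semidiscrete free energy dissipation: summing the cell entropy identities Δxᵢ dηᵢ/dt + Δxᵢ Hᵢ dρᵢ/dt + Gᵢ₊½ − Gᵢ₋½ = −uᵢ(γΔxᵢρᵢuᵢ + Δxᵢρᵢ Σⱼ Δxⱼρⱼ(uᵢ−uⱼ)ψᵢⱼ) over i (with telescoping boundary terms vanishing and Hᵢ = Vᵢ + ΣⱼΔxⱼWᵢⱼρⱼ with symmetric Wᵢⱼ = Wⱼᵢ), the discrete total energy E^Δ(t) = Σᵢ Δxᵢ(½ρᵢuᵢ² + Π(ρᵢ) + Vᵢρᵢ) + ½ΣᵢⱼΔxᵢΔxⱼWᵢⱼρᵢρⱼ satisfies dE^Δ/dt ≤ −γΣᵢΔxᵢρᵢuᵢ² − ½ΣᵢⱼΔxᵢΔxⱼρᵢρⱼ(uᵢ−uⱼ)²ψᵢⱼ. -/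
/-!
Summing the cell entropy identities, the flux differences telescope to the vanishing boundary
fluxes. Since `W` is symmetric, `Σᵢ Δxᵢ Hᵢ ρ̇ᵢ` is exactly the time derivative of the potential
and interaction energy, and since `ψ` is symmetric, the alignment work
`Σᵢⱼ ΔxᵢΔxⱼρᵢρⱼ uᵢ(uᵢ - uⱼ)ψᵢⱼ` symmetrizes to `½ Σᵢⱼ ΔxᵢΔxⱼρᵢρⱼ(uᵢ - uⱼ)²ψᵢⱼ`. So `dE^Δ/dt`
in fact equals the right-hand side.
-/

open Finset

theorem Fin.sum_succ_sub_castSucc {M : Type*} [AddCommGroup M] {n : ℕ} (f : Fin (n + 1) → M) :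
    ∑ i : Fin n, (f i.succ - f i.castSucc) = f (Fin.last n) - f 0 := by
  rw [sum_sub_distrib, eq_sub_of_add_eq' (Fin.sum_univ_succ f).symm,
    eq_sub_of_add_eq (Fin.sum_univ_castSucc f).symm, sub_sub_sub_cancel_left]

theorem sum_sum_mul_mul_sub_eq_half_sum_sum_mul_sq {ι K : Type*} [Fintype ι] [Field K]
    [CharZero K] {a : ι → ι → K} (ha : ∀ i j, a i j = a j i) (x : ι → K) :
    ∑ i, ∑ j, a i j * (x i * (x i - x j)) = (1 / 2) * ∑ i, ∑ j, a i j * (x i - x j) ^ 2 := by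
  have hswap : ∑ i, ∑ j, a i j * (x i * (x i - x j)) = ∑ i, ∑ j, a i j * (-x j * (x i - x j)) := by
    rw [sum_comm]
    exact sum_congr rfl fun i _ => sum_congr rfl fun j _ => by rw [ha]; ring
  have hsum : ∑ i, ∑ j, a i j * (x i - x j) ^ 2 =
      ∑ i, ∑ j, a i j * (x i * (x i - x j)) + ∑ i, ∑ j, a i j * (-x j * (x i - x j)) := by
    simp only [← sum_add_distrib]
    exact sum_congr rfl fun i _ => sum_congr rfl fun j _ => by ring
  rw [hsum, ← hswap]
  ring

theorem HasDerivAt.half_sum_sum_mul_mul {ι : Type*} [Fintype ι] {A : ι → ι → ℝ}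
    (hA : ∀ i j, A i j = A j i) {f : ℝ → ι → ℝ} {f' : ι → ℝ} {t : ℝ}
    (hf : ∀ i, HasDerivAt (fun s => f s i) (f' i) t) :
    HasDerivAt (fun s => (1 / 2) * ∑ i, ∑ j, A i j * f s i * f s j)
      (∑ i, f' i * ∑ j, A i j * f t j) t := by
  have h := (HasDerivAt.fun_sum (u := univ) fun i _ => HasDerivAt.fun_sum (u := univ) fun j _ =>
    ((hf i).const_mul (A i j)).mul (hf j)).const_mul (1 / 2 : ℝ)
  refine h.congr_deriv ?_
  have hswap : ∑ i, ∑ j, A i j * f t i * f' j = ∑ i, ∑ j, A i j * f' i * f t j := by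
    rw [sum_comm]
    exact sum_congr rfl fun i _ => sum_congr rfl fun j _ => by rw [hA]; ring
  calc (1 / 2) * ∑ i, ∑ j, (A i j * f' i * f t j + A i j * f t i * f' j)
      = (1 / 2) * (∑ i, ∑ j, A i j * f' i * f t j + ∑ i, ∑ j, A i j * f t i * f' j) := by
        simp only [sum_add_distrib]
    _ = ∑ i, ∑ j, A i j * f' i * f t j := by rw [hswap]; ring
    _ = ∑ i, f' i * ∑ j, A i j * f t j :=
        sum_congr rfl fun i _ => by rw [mul_sum]; exact sum_congr rfl fun j _ => by ring

theorem sum_neg_mul_damping_add_alignment {ι : Type*} [Fintype ι] (γ : ℝ) (Δx ρ u : ι → ℝ)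
    {ψ : ι → ι → ℝ} (hψ : ∀ i j, ψ i j = ψ j i) :
    ∑ i, -(u i) * (γ * Δx i * ρ i * u i + Δx i * ρ i * ∑ j, Δx j * ρ j * (u i - u j) * ψ i j)
      = -(γ * ∑ i, Δx i * ρ i * u i ^ 2)
        - (1 / 2) * ∑ i, ∑ j, Δx i * Δx j * ρ i * ρ j * (u i - u j) ^ 2 * ψ i j := by
  have hcell (i : ι) :
      -(u i) * (γ * Δx i * ρ i * u i + Δx i * ρ i * ∑ j, Δx j * ρ j * (u i - u j) * ψ i j)
        = -(γ * (Δx i * ρ i * u i ^ 2))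
          - ∑ j, Δx i * Δx j * ρ i * ρ j * ψ i j * (u i * (u i - u j)) := by
    have h : ∑ j, Δx i * Δx j * ρ i * ρ j * ψ i j * (u i * (u i - u j))
        = Δx i * ρ i * u i * ∑ j, Δx j * ρ j * (u i - u j) * ψ i j := by
      rw [mul_sum]
      exact sum_congr rfl fun j _ => by ring
    rw [h]
    ring
  rw [sum_congr rfl fun i _ => hcell i, sum_sub_distrib, sum_neg_distrib, mul_sum,
    sum_sum_mul_mul_sub_eq_half_sum_sum_mul_sq (fun i j => by rw [hψ]; ring)]
  congr 2
  exact sum_congr rfl fun i _ => sum_congr rfl fun j _ => by ring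

theorem hasDerivAt_sum_mul_add_half_sum_sum {ι : Type*} [Fintype ι] (Δx V : ι → ℝ)
    {W : ι → ι → ℝ} (hW : ∀ i j, W i j = W j i) {η ρ : ℝ → ι → ℝ} {η' ρ' : ι → ℝ} {t : ℝ}
    (hη : ∀ i, HasDerivAt (fun s => η s i) (η' i) t)
    (hρ : ∀ i, HasDerivAt (fun s => ρ s i) (ρ' i) t) :
    HasDerivAt (fun s => ∑ i, Δx i * (η s i + V i * ρ s i)
        + (1 / 2) * ∑ i, ∑ j, Δx i * Δx j * W i j * ρ s i * ρ s j)
      (∑ i, (Δx i * η' i + Δx i * (V i + ∑ j, Δx j * W i j * ρ t j) * ρ' i)) t := by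
  have h := (HasDerivAt.fun_sum (u := univ) fun i _ =>
      ((hη i).add ((hρ i).const_mul (V i))).const_mul (Δx i)).add
    (HasDerivAt.half_sum_sum_mul_mul (A := fun i j => Δx i * Δx j * W i j)
      (fun i j => by rw [hW]; ring) hρ)
  refine h.congr_deriv ?_
  rw [← sum_add_distrib]
  refine sum_congr rfl fun i _ => ?_
  have hH : ∑ j, Δx i * Δx j * W i j * ρ t j = Δx i * ∑ j, Δx j * W i j * ρ t j := by
    rw [mul_sum]
    exact sum_congr rfl fun j _ => by ring
  rw [hH]
  ring

theorem stmt_17_general (n : ℕ) (Δx V : Fin n → ℝ) (W ψ : Fin n → Fin n → ℝ) (γ : ℝ)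
    (Pif : ℝ → ℝ) (hPif : Differentiable ℝ Pif)
    (ρ u : ℝ → Fin n → ℝ) (G : ℝ → Fin (n+1) → ℝ)
    (hWsymm : ∀ i j, W i j = W j i)
    (hψsymm : ∀ i j, ψ i j = ψ j i)
    (hρd : ∀ i, Differentiable ℝ (fun t => ρ t i))
    (hud : ∀ i, Differentiable ℝ (fun t => u t i))
    -- no-flux boundaries for the numerical entropy flux
    (hGb : ∀ t : ℝ, G t 0 = 0 ∧ G t (Fin.last n) = 0)
    -- cell entropy identities, with `Hᵢ = Vᵢ + Σⱼ Δxⱼ Wᵢⱼ ρⱼ`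
    (hent : ∀ (t : ℝ) (i : Fin n),
      Δx i * deriv (fun s => Pif (ρ s i) + (1/2) * ρ s i * (u s i)^2) t
      + Δx i * (V i + ∑ j : Fin n, Δx j * W i j * ρ t j) * deriv (fun s => ρ s i) t
      + G t i.succ - G t i.castSucc
      = -(u t i) * (γ * Δx i * ρ t i * u t i
          + Δx i * ρ t i * ∑ j : Fin n, Δx j * ρ t j * (u t i - u t j) * ψ i j)) :
    ∀ t : ℝ,
      deriv (fun s =>
        (∑ i : Fin n, Δx i * ((1/2) * ρ s i * (u s i)^2 + Pif (ρ s i) + V i * ρ s i))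
        + (1/2) * ∑ i : Fin n, ∑ j : Fin n, Δx i * Δx j * W i j * ρ s i * ρ s j) t
      ≤ -(γ * ∑ i : Fin n, Δx i * ρ t i * (u t i)^2)
        - (1/2) * ∑ i : Fin n, ∑ j : Fin n,
            Δx i * Δx j * ρ t i * ρ t j * (u t i - u t j)^2 * ψ i j := by
  intro t
  have hη (i : Fin n) : HasDerivAt (fun s => (1/2) * ρ s i * (u s i)^2 + Pif (ρ s i))
      (deriv (fun s => Pif (ρ s i) + (1/2) * ρ s i * (u s i)^2) t) t := by
    simp_rw [add_comm (Pif _)]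
    exact DifferentiableAt.hasDerivAt (by fun_prop)
  have hE := hasDerivAt_sum_mul_add_half_sum_sum Δx V hWsymm hη fun i => (hρd i t).hasDerivAt
  have hflux : ∑ i : Fin n, (G t i.succ - G t i.castSucc) = 0 := by
    rw [Fin.sum_succ_sub_castSucc, (hGb t).1, (hGb t).2, sub_zero]
  rw [hE.deriv, ← sum_neg_mul_damping_add_alignment γ _ _ _ hψsymm, ← add_zero (∑ i, _), ← hflux,
    ← sum_add_distrib]
  exact (sum_congr rfl fun i _ => by rw [← hent t i]; ring).le

/-- Semidiscrete free energy dissipation: summing the cell entropy identities over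
the cells (with telescoping boundary entropy fluxes vanishing, symmetric `W` and
symmetric nonnegative `ψ`), the discrete total energy
`E^Δ(t) = Σᵢ Δxᵢ(½ρᵢuᵢ² + Π(ρᵢ) + Vᵢρᵢ) + ½ΣᵢⱼΔxᵢΔxⱼWᵢⱼρᵢρⱼ` satisfies
`dE^Δ/dt ≤ -γΣᵢΔxᵢρᵢuᵢ² - ½ΣᵢⱼΔxᵢΔxⱼρᵢρⱼ(uᵢ-uⱼ)²ψᵢⱼ`. -/
theorem stmt_17 (n : ℕ) (Δx V : Fin n → ℝ) (W ψ : Fin n → Fin n → ℝ) (γ : ℝ)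
    (Pif : ℝ → ℝ) (hPif : Differentiable ℝ Pif)
    (ρ u : ℝ → Fin n → ℝ) (G : ℝ → Fin (n+1) → ℝ)
    (hΔx : ∀ i, 0 < Δx i) (hγ : 0 ≤ γ)
    (hρnn : ∀ t i, 0 ≤ ρ t i)
    (hWsymm : ∀ i j, W i j = W j i)
    (hψsymm : ∀ i j, ψ i j = ψ j i) (hψpos : ∀ i j, 0 ≤ ψ i j)
    (hρd : ∀ i, Differentiable ℝ (fun t => ρ t i))
    (hud : ∀ i, Differentiable ℝ (fun t => u t i))
    -- no-flux boundaries for the numerical entropy flux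
    (hGb : ∀ t : ℝ, G t 0 = 0 ∧ G t (Fin.last n) = 0)
    -- cell entropy identities, with `Hᵢ = Vᵢ + Σⱼ Δxⱼ Wᵢⱼ ρⱼ`
    (hent : ∀ (t : ℝ) (i : Fin n),
      Δx i * deriv (fun s => Pif (ρ s i) + (1/2) * ρ s i * (u s i)^2) t
      + Δx i * (V i + ∑ j : Fin n, Δx j * W i j * ρ t j) * deriv (fun s => ρ s i) t
      + G t i.succ - G t i.castSucc
      = -(u t i) * (γ * Δx i * ρ t i * u t i
          + Δx i * ρ t i * ∑ j : Fin n, Δx j * ρ t j * (u t i - u t j) * ψ i j)) :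
    ∀ t : ℝ,
      deriv (fun s =>
        (∑ i : Fin n, Δx i * ((1/2) * ρ s i * (u s i)^2 + Pif (ρ s i) + V i * ρ s i))
        + (1/2) * ∑ i : Fin n, ∑ j : Fin n, Δx i * Δx j * W i j * ρ s i * ρ s j) t
      ≤ -(γ * ∑ i : Fin n, Δx i * ρ t i * (u t i)^2)
        - (1/2) * ∑ i : Fin n, ∑ j : Fin n,
            Δx i * Δx j * ρ t i * ρ t j * (u t i - u t j)^2 * ψ i j :=
  stmt_17_general n Δx V W ψ γ Pif hPif ρ u G hWsymm hψsymm hρd hud hGb hent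
end
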